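/- For every positive integer r, the abelian group H¹(SL₂⁺(ℤ/2^r), (ℤ/2^r)²) is annihilated by 2^{r-1} (in particular it vanishes for r = 1). -/

import Mathlib

set_option synthInstance.maxHeartbeats 1000000
open Matrix

instance slSMul (n : ℕ) : SMul (SpecialLinearGroup (Fin 2) (ZMod n)) (Fin 2 → ZMod n) :=
  ⟨fun g v => (g : Matrix (Fin 2) (Fin 2) (ZMod n)).mulVec v⟩

lemma slAct_def {n : ℕ} (g : SpecialLinearGroup (Fin 2) (ZMod n)) (v : Fin 2 → ZMod n) :
    g • v = (g : Matrix (Fin 2) (Fin 2) (ZMod n)).mulVec v := rfl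

/-- The tautological action of `SL₂(ℤ/n)` on `(ℤ/n)²`. -/
instance slAct (n : ℕ) : DistribMulAction (SpecialLinearGroup (Fin 2) (ZMod n)) (Fin 2 → ZMod n) where
  one_smul v := by rw [slAct_def]; simp
  mul_smul g h v := by
    rw [slAct_def, slAct_def, slAct_def]
    simp only [Matrix.mulVec_mulVec]
    rfl
  smul_zero g := Matrix.mulVec_zero _
  smul_add g x y := Matrix.mulVec_add _ x y

/-- The action of `SL₂(ℤ/2)` on the three nonzero vectors of `(ℤ/2)²`. -/
instance nzAct : MulAction (SpecialLinearGroup (Fin 2) (ZMod 2)) {v : Fin 2 → ZMod 2 // v ≠ 0} where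
  smul g v := ⟨g • (v : Fin 2 → ZMod 2), fun h => v.2 (by
    have := congrArg (fun w => g⁻¹ • w) h
    simpa [smul_smul] using this)⟩
  one_smul v := Subtype.ext (one_smul _ (v : Fin 2 → ZMod 2))
  mul_smul g h v := Subtype.ext (mul_smul g h (v : Fin 2 → ZMod 2))

/-- The sign character of `SL₂(ℤ/2) ≅ S₃`, via the permutation action on
the three nonzero vectors of `(ℤ/2)²`. -/
noncomputable def signChar : SpecialLinearGroup (Fin 2) (ZMod 2) →* ℤˣ :=
  Equiv.Perm.sign.comp
    (MulAction.toPermHom (SpecialLinearGroup (Fin 2) (ZMod 2)) {v : Fin 2 → ZMod 2 // v ≠ 0})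

/-- `SL₂⁺(ℤ/n)`: all of `SL₂(ℤ/n)` for odd `n`; for even `n` the kernel of the composition of
reduction mod 2 with the sign character `SL₂(ℤ/2) ≅ S₃ → {±1}`. -/
noncomputable def SL2Plus (n : ℕ) : Subgroup (SpecialLinearGroup (Fin 2) (ZMod n)) :=
  if h : 2 ∣ n then
    (signChar.comp (SpecialLinearGroup.map (ZMod.castHom h (ZMod 2)))).ker
  else ⊤

/-- A 1-cocycle of a group `G` with values in a `G`-module `M`. -/
def IsCocycle {G M : Type*} [Group G] [AddCommGroup M] [DistribMulAction G M]
    (f : G → M) : Prop :=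
  ∀ g h : G, f (g * h) = f g + g • f h

/-- A 1-coboundary of a group `G` with values in a `G`-module `M`.  A cohomology class in
`H¹(G, M)` is zero precisely when a representing cocycle is a coboundary. -/
def IsCoboundary {G M : Type*} [Group G] [AddCommGroup M] [DistribMulAction G M]
    (f : G → M) : Prop :=
  ∃ m : M, ∀ g : G, f g = g • m - m

/-!
For `r ≥ 2` the scalar `-1` lies in `SL₂⁺(ℤ/2^r)`, is central and acts on `(ℤ/2^r)²` as `-1`.
Evaluating a cocycle `f` on both sides of `(-1) g = g (-1)` gives `2 f(g) = g m - m` with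
`m = -f(-1)`, so already `2 f` is a coboundary. For `r = 1` the group `SL₂⁺(ℤ/2) ≅ A₃` has odd
order while `(ℤ/2)²` is killed by `2`; since `|G| f` is always a coboundary (average `f` over
`G`), `f` itself is one.
-/

section Cocycle

variable {G M : Type*} [Group G] [AddCommGroup M] [DistribMulAction G M] {f : G → M}

theorem IsCoboundary.smul (n : ℕ) (hf : IsCoboundary f) : IsCoboundary (fun g => n • f g) := by
  obtain ⟨m, hm⟩ := hf
  exact ⟨n • m, fun g => by simp only [hm, smul_sub, smul_comm n g]⟩

theorem IsCocycle.smul_sub_self_of_commute (hf : IsCocycle f) {z g : G} (hzg : Commute z g) :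
    z • f g - f g = g • f z - f z := by
  have h := hf z g
  rw [hzg.eq, hf g z] at h
  rw [sub_eq_sub_iff_add_eq_add, add_comm, ← h, add_comm]

theorem IsCocycle.isCoboundary_two_smul (hf : IsCocycle f) {z : G} (hz : ∀ g, Commute z g)
    (hneg : ∀ m : M, z • m = -m) : IsCoboundary (fun g => 2 • f g) := by
  refine ⟨-f z, fun g => ?_⟩
  have h := hf.smul_sub_self_of_commute (hz g)
  rw [hneg] at h
  show 2 • f g = g • -f z - -f z
  rw [smul_neg, neg_sub_neg, ← neg_sub, ← h]
  abel

theorem IsCocycle.isCoboundary_card_smul [Finite G] (hf : IsCocycle f) :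
    IsCoboundary (fun g => Nat.card G • f g) := by
  have := Fintype.ofFinite G
  refine ⟨-∑ h, f h, fun g => ?_⟩
  have hsum : ∑ h, f h = Nat.card G • f g + g • ∑ h, f h := by
    calc ∑ h, f h = ∑ h, f (g * h) := (Fintype.sum_equiv (Equiv.mulLeft g) _ _ fun _ => rfl).symm
      _ = Nat.card G • f g + g • ∑ h, f h := by
        simp only [hf g, Finset.sum_add_distrib, Finset.sum_const, Finset.card_univ,
          Nat.card_eq_fintype_card, Finset.smul_sum]
  show _ = _ - _
  rw [smul_neg, neg_sub_neg]
  exact eq_sub_of_add_eq hsum.symm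

theorem IsCocycle.isCoboundary_of_odd_card [Finite G] (hG : Odd (Nat.card G))
    (hM : ∀ m : M, 2 • m = 0) (hf : IsCocycle f) : IsCoboundary f := by
  obtain ⟨k, hk⟩ := hG
  have hcard : ∀ m : M, Nat.card G • m = m := fun m => by
    rw [hk, add_smul, mul_comm, mul_smul, hM, smul_zero, zero_add, one_smul]
  simpa only [hcard] using hf.isCoboundary_card_smul

end Cocycle

theorem signChar_ne_one_of_sq_eq_one :
    ∀ g : SpecialLinearGroup (Fin 2) (ZMod 2), g ^ 2 = 1 → g ≠ 1 → signChar g ≠ 1 := by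
  decide

theorem mem_SL2Plus_two {g : SpecialLinearGroup (Fin 2) (ZMod 2)} :
    g ∈ SL2Plus 2 ↔ signChar g = 1 := by
  rw [SL2Plus, dif_pos dvd_rfl, MonoidHom.mem_ker, MonoidHom.comp_apply, ZMod.castHom_self]
  rfl

theorem odd_card_SL2Plus_two : Odd (Nat.card (SL2Plus 2)) := by
  rw [Nat.odd_iff, ← Nat.two_dvd_ne_zero]
  intro h2
  have := Fact.mk Nat.prime_two
  obtain ⟨g, hg⟩ := exists_prime_orderOf_dvd_card' 2 h2
  obtain ⟨hsq, hne⟩ := orderOf_eq_prime_iff.mp hg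
  exact signChar_ne_one_of_sq_eq_one g (congrArg Subtype.val hsq)
    (fun h1 => hne (Subtype.ext h1)) (mem_SL2Plus_two.mp g.2)

theorem neg_one_mem_SL2Plus (n : ℕ) : -1 ∈ SL2Plus n := by
  unfold SL2Plus
  split_ifs with h
  · rw [MonoidHom.mem_ker, MonoidHom.comp_apply]
    convert map_one signChar
    rw [← map_one (SpecialLinearGroup.map (ZMod.castHom h (ZMod 2)))]
    ext i j
    simp only [SpecialLinearGroup.map_apply_coe, RingHom.mapMatrix_apply, Matrix.map_apply,
      SpecialLinearGroup.coe_neg, Matrix.neg_apply, map_neg]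
    exact ZMod.neg_eq_self_mod_two _
  · trivial

theorem neg_one_smul_SL2 {n : ℕ} (v : Fin 2 → ZMod n) :
    (-1 : SpecialLinearGroup (Fin 2) (ZMod n)) • v = -v := by
  rw [slAct_def, SpecialLinearGroup.coe_neg, Matrix.neg_mulVec]
  exact congrArg Neg.neg (one_smul (SpecialLinearGroup (Fin 2) (ZMod n)) v)

open Matrix in
theorem stmt_5_general (r : ℕ)
    (f : SL2Plus (2 ^ r) → (Fin 2 → ZMod (2 ^ r))) (hf : IsCocycle f) :
    IsCoboundary (fun g => (2 ^ (r - 1) : ℕ) • f g) := by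
  obtain _ | _ | r := r
  · exact ⟨0, fun _ => funext fun _ => Subsingleton.elim (α := ZMod 1) _ _⟩
  · have hM : ∀ m : Fin 2 → ZMod 2, 2 • m = 0 := fun m => funext fun _ =>
      (two_nsmul _).trans (CharTwo.add_self_eq_zero _)
    simpa only [Nat.add_sub_cancel, pow_zero, one_smul] using hf.isCoboundary_of_odd_card odd_card_SL2Plus_two hM
  · let z : SL2Plus (2 ^ (r + 2)) := ⟨-1, neg_one_mem_SL2Plus _⟩
    have hz : ∀ g, Commute z g := fun g => Subtype.ext (Commute.neg_one_left _)
    have hneg : ∀ v : Fin 2 → ZMod (2 ^ (r + 2)), z • v = -v := neg_one_smul_SL2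
    have h2 := (hf.isCoboundary_two_smul hz hneg).smul (2 ^ r)
    simpa only [← mul_smul, ← pow_succ, Nat.add_sub_cancel] using h2

open Matrix in
/-- for `r ≥ 1`, the group `H¹(SL₂⁺(ℤ/2^r), (ℤ/2^r)²)` is annihilated by
`2^(r-1)`: for every 1-cocycle `f`, the cocycle `2^(r-1) • f` is a coboundary. -/
theorem stmt_5 (r : ℕ) (hr : 0 < r)
    (f : SL2Plus (2 ^ r) → (Fin 2 → ZMod (2 ^ r))) (hf : IsCocycle f) :
    IsCoboundary (fun g => (2 ^ (r - 1) : ℕ) • f g) :=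
  stmt_5_general r f hf
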